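/- Let q_1, q_2, β*, w_2 be positive real numbers, and set w_1* = w_2/β*, x_1* = q_1/(1 + β*), x_2* = q_2 β*/(1 + β*), c = (1 + β*) w_2/β*, and D_0 = c² − 4 q_1 w_2/(1 + β*). Let M be the 3×3 real matrix M = [[0, −w_1*, 0], [q_1 − x_1*, −(w_1* + w_2), 0], [−x_2*, 0, −(w_1* + w_2)]]. Then the multiset of complex eigenvalues of M is {−c, (−c + √D_0)/2, (−c − √D_0)/2} (with √D_0 interpreted as i√(−D_0) when D_0 < 0), and every eigenvalue of M has strictly negative real part. -/
import Mathlib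

open Polynomial in
/-- The eigenvalues (with multiplicity) of the Jacobian `M` of the fast subsystem
for two mutants are `-c` and `(-c ± √D₀)/2` (with `√D₀ = i√(-D₀)` when `D₀ < 0`),
and they all have strictly negative real part. -/
theorem stmt_15 (q₁ q₂ βs w₂ : ℝ) (hq₁ : 0 < q₁) (hq₂ : 0 < q₂)
    (hβ : 0 < βs) (hw₂ : 0 < w₂)
    (w₁s x₁s x₂s c D₀ : ℝ)
    (hw₁s : w₁s = w₂ / βs)
    (hx₁s : x₁s = q₁ / (1 + βs))
    (hx₂s : x₂s = q₂ * βs / (1 + βs))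
    (hc : c = (1 + βs) * w₂ / βs)
    (hD₀ : D₀ = c ^ 2 - 4 * q₁ * w₂ / (1 + βs))
    (s : ℂ)
    (hs : s = if 0 ≤ D₀ then ((Real.sqrt D₀ : ℝ) : ℂ)
      else Complex.I * ((Real.sqrt (-D₀) : ℝ) : ℂ))
    (M : Matrix (Fin 3) (Fin 3) ℝ)
    (hM : M = !![0, -w₁s, 0; q₁ - x₁s, -(w₁s + w₂), 0; -x₂s, 0, -(w₁s + w₂)]) :
    ((M.map Complex.ofReal).charpoly).roots =
      {-(c : ℂ), (-(c : ℂ) + s) / 2, (-(c : ℂ) - s) / 2} ∧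
    ∀ z ∈ ((M.map Complex.ofReal).charpoly).roots, z.re < 0 := by
  have hβ1 : (0:ℝ) < 1 + βs := by linarith
  set k : ℝ := q₁ * w₂ / (1 + βs) with hk
  have hk0 : 0 < k := by positivity
  have hc0 : 0 < c := by rw [hc]; positivity
  have hcw : c = w₁s + w₂ := by rw [hc, hw₁s]; field_simp
  have hab : w₁s * (q₁ - x₁s) = k := by rw [hw₁s, hx₁s, hk]; field_simp; ring
  have hs2 : s * s = (D₀ : ℂ) := by
    rw [hs]
    split_ifs with h
    · rw [← Complex.ofReal_mul, Real.mul_self_sqrt h]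
    · have h' : (0:ℝ) ≤ -D₀ := by linarith
      have h2 : Real.sqrt (-D₀) * Real.sqrt (-D₀) = -D₀ := Real.mul_self_sqrt h'
      rw [show Complex.I * ((Real.sqrt (-D₀):ℝ):ℂ) * (Complex.I * ((Real.sqrt (-D₀):ℝ):ℂ))
          = (Complex.I * Complex.I) * (((Real.sqrt (-D₀):ℝ):ℂ) * ((Real.sqrt (-D₀):ℝ):ℂ)) by ring,
        Complex.I_mul_I, ← Complex.ofReal_mul, h2]
      push_cast
      ring
  have hD₀C : (D₀ : ℂ) = (c:ℂ)^2 - 4*(k:ℂ) := by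
    rw [hD₀, hk]; push_cast; ring
  set r₁ : ℂ := (-(c : ℂ) + s) / 2 with hr₁
  set r₂ : ℂ := (-(c : ℂ) - s) / 2 with hr₂
  have hsum : r₁ + r₂ = -(c:ℂ) := by rw [hr₁, hr₂]; ring
  have hprod : r₁ * r₂ = ((k:ℝ):ℂ) := by
    rw [hr₁, hr₂]
    linear_combination (-1/4 : ℂ) * hs2 + (-1/4 : ℂ) * hD₀C
  have hchar : (M.map Complex.ofReal).charpoly
      = X * (X + C ((w₁s:ℂ)+(w₂:ℂ)))^2
        + C ((w₁s:ℂ)) * C ((q₁:ℂ)-(x₁s:ℂ)) * (X + C ((w₁s:ℂ)+(w₂:ℂ))) := by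
    rw [Matrix.charpoly, Matrix.det_fin_three]
    simp [hM, Matrix.charmatrix_apply_eq, Matrix.charmatrix_apply_ne, Matrix.map_apply]
    ring
  have hccC : ((w₁s:ℂ)+(w₂:ℂ)) = (c:ℂ) := by
    rw [hcw]; push_cast; ring
  have habC : C ((w₁s:ℂ)) * C ((q₁:ℂ)-(x₁s:ℂ)) = (C (r₁ * r₂) : ℂ[X]) := by
    rw [← map_mul, hprod]
    congr 1
    rw [← hab]; push_cast; ring
  have hfac : (M.map Complex.ofReal).charpoly
      = (X - C (-(c:ℂ))) * ((X - C r₁) * (X - C r₂)) := by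
    rw [hchar, hccC, habC, map_mul, map_neg]
    have hsumC : (C r₁ : ℂ[X]) + C r₂ = - C (c:ℂ) := by
      rw [← map_add, hsum, map_neg]
    linear_combination ((X + C (c:ℂ)) * X) * hsumC
  have hroots : ((M.map Complex.ofReal).charpoly).roots = {-(c : ℂ), r₁, r₂} := by
    rw [hfac]
    have : (X - C (-(c:ℂ))) * ((X - C r₁) * (X - C r₂))
        = (({-(c:ℂ), r₁, r₂} : Multiset ℂ).map fun a => X - C a).prod := by
      simp [Multiset.insert_eq_cons]
    rw [this, Polynomial.roots_multiset_prod_X_sub_C]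
  refine ⟨hroots, ?_⟩
  intro z hz
  rw [hroots] at hz
  simp only [Multiset.insert_eq_cons, Multiset.mem_cons, Multiset.mem_singleton] at hz
  have hre : ∀ a b : ℝ, (((a:ℂ) + Complex.I * (b:ℂ))).re = a := by
    intro a b; simp
  rcases hz with hz | hz | hz
  · rw [hz]; simp [hc0]
  · rw [hz, hr₁, hs]
    split_ifs with h
    · have hD₀lt : D₀ < c^2 := by
        rw [hD₀]
        have hpos : 0 < 4 * q₁ * w₂ / (1 + βs) := by positivity
        linarith
      have hsq : Real.sqrt D₀ < c := by
        have := Real.sqrt_lt_sqrt h hD₀lt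
        rwa [Real.sqrt_sq hc0.le] at this
      have : ((-(c : ℂ) + (Real.sqrt D₀ : ℝ)) / 2) = (((-c + Real.sqrt D₀)/2 : ℝ) : ℂ) := by
        push_cast; ring
      rw [this, Complex.ofReal_re]
      linarith
    · have : ((-(c : ℂ) + Complex.I * (Real.sqrt (-D₀) : ℝ)) / 2)
          = (((-c/2 : ℝ)) : ℂ) + Complex.I * (((Real.sqrt (-D₀)/2 : ℝ)) : ℂ) := by
        push_cast; ring
      rw [this, hre]
      linarith
  · rw [hz, hr₂, hs]
    split_ifs with h
    · have hsq : 0 ≤ Real.sqrt D₀ := Real.sqrt_nonneg _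
      have : ((-(c : ℂ) - (Real.sqrt D₀ : ℝ)) / 2) = (((-c - Real.sqrt D₀)/2 : ℝ) : ℂ) := by
        push_cast; ring
      rw [this, Complex.ofReal_re]
      linarith
    · have : ((-(c : ℂ) - Complex.I * (Real.sqrt (-D₀) : ℝ)) / 2)
          = (((-c/2 : ℝ)) : ℂ) + Complex.I * (((-Real.sqrt (-D₀)/2 : ℝ)) : ℂ) := by
        push_cast; ring
      rw [this, hre]
      linarith
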